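/- arXiv:2310.14631 — 4 statements merged into one kernel-verified Lean document; each statement's English description precedes it below -/
import Mathlib

section
/- Let s, β, λ > 0 and X = s + E with E ~ Exp(β), Y ~ Exp(λ) independent of E. For 0 ≤ ω ≤ s, the expected duration during one renewal cycle for which the item is stored in cache equals E[(X - Y - ω)·1{Y + ω ≤ X}] = (β/(λ(λ+β)))·exp(-λ(s-ω)) + s - ω - 1/λ + 1/β. -/
/-!
Write `a = s - ω ≥ 0`; the cached duration is `(a + E - Y)⁺` and, by independence, `(E, Y)`
has law `Exp β ⊗ Exp λ`. Integrating out `Y` first gives `E[(c - Y)⁺] = c - 1/λ + e^{-λc}/λ` for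
`c ≥ 0`, which at `c = a + E` is affine in `E` plus a multiple of `e^{-λE}`. The outer integral
therefore only needs the mean `E[E] = 1/β` and the Laplace transform `E[e^{-λE}] = β/(β + λ)`.
-/

open MeasureTheory ProbabilityTheory Real Set

namespace ProbabilityTheory

variable {r : ℝ}

lemma expMeasure_eq_withDensity : expMeasure r = volume.withDensity (exponentialPDF r) := rfl

lemma toReal_exponentialPDF_smul_eq_indicator (hr : 0 ≤ r) (g : ℝ → ℝ) :
    (fun x => (exponentialPDF r x).toReal • g x)
      = (Ici 0).indicator (fun x => r * exp (-(r * x)) * g x) := by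
  ext x
  by_cases hx : 0 ≤ x
  · rw [indicator_of_mem (mem_Ici.mpr hx), exponentialPDF_of_nonneg hx,
      ENNReal.toReal_ofReal (by positivity), smul_eq_mul]
  · rw [indicator_of_notMem (by simpa using hx), exponentialPDF_of_neg (not_le.mp hx),
      ENNReal.toReal_zero, zero_smul]

lemma measurable_exponentialPDF : Measurable (exponentialPDF r) :=
  (measurable_exponentialPDFReal r).ennreal_ofReal

lemma ae_exponentialPDF_lt_top : ∀ᵐ x, exponentialPDF r x < ⊤ :=
  ae_of_all _ fun _ => ENNReal.ofReal_lt_top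

lemma integral_expMeasure_eq_setIntegral (hr : 0 ≤ r) (g : ℝ → ℝ) :
    ∫ x, g x ∂expMeasure r = ∫ x in Ioi 0, r * exp (-(r * x)) * g x := by
  rw [expMeasure_eq_withDensity,
    integral_withDensity_eq_integral_toReal_smul measurable_exponentialPDF ae_exponentialPDF_lt_top,
    toReal_exponentialPDF_smul_eq_indicator hr,
    integral_indicator measurableSet_Ici, integral_Ici_eq_integral_Ioi]

lemma integrable_expMeasure_iff (hr : 0 ≤ r) {g : ℝ → ℝ} :
    Integrable g (expMeasure r) ↔ IntegrableOn (fun x => r * exp (-(r * x)) * g x) (Ioi 0) := by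
  rw [expMeasure_eq_withDensity,
    integrable_withDensity_iff_integrable_smul' measurable_exponentialPDF ae_exponentialPDF_lt_top,
    toReal_exponentialPDF_smul_eq_indicator hr,
    integrable_indicator_iff measurableSet_Ici, integrableOn_Ici_iff_integrableOn_Ioi]

lemma ae_nonneg_expMeasure : ∀ᵐ x ∂expMeasure r, 0 ≤ x := by
  simp only [ae_iff, not_le]
  change expMeasure r (Iio 0) = 0
  rw [expMeasure_eq_withDensity, withDensity_apply _ measurableSet_Iio]
  exact lintegral_exponentialPDF_of_nonpos le_rfl

lemma integrable_id_expMeasure (hr : 0 < r) : Integrable (fun x => x) (expMeasure r) := by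
  rw [integrable_expMeasure_iff hr.le]
  refine IntegrableOn.congr_fun ((integrableOn_rpow_mul_exp_neg_mul_rpow (s := 1) (p := 1)
    (by norm_num) one_pos hr).const_mul r) (fun x _ => ?_) measurableSet_Ioi
  simp only [rpow_one, neg_mul]
  ring

lemma integral_id_expMeasure (hr : 0 < r) : ∫ x, x ∂expMeasure r = 1 / r := by
  have h := integral_rpow_mul_exp_neg_mul_Ioi two_pos hr
  norm_num only [rpow_one, rpow_two, Gamma_two, mul_one] at h
  rw [integral_expMeasure_eq_setIntegral hr.le]
  simp_rw [mul_assoc r, mul_comm (exp _)]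
  rw [integral_const_mul, h]
  field_simp

variable {t : ℝ}

lemma integrable_exp_neg_mul_expMeasure (hr : 0 ≤ r) (ht : 0 < r + t) :
    Integrable (fun x => exp (-(t * x))) (expMeasure r) := by
  rw [integrable_expMeasure_iff hr]
  refine IntegrableOn.congr_fun ((integrableOn_exp_mul_Ioi (a := -(r + t)) (by linarith)
    0).const_mul r) (fun x _ => ?_) measurableSet_Ioi
  rw [mul_assoc, ← exp_add]
  ring_nf

lemma integral_exp_neg_mul_expMeasure (hr : 0 ≤ r) (ht : 0 < r + t) :
    ∫ x, exp (-(t * x)) ∂expMeasure r = r / (r + t) := by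
  rw [integral_expMeasure_eq_setIntegral hr]
  simp_rw [mul_assoc r, ← exp_add, integral_const_mul]
  have h := integral_exp_mul_Ioi (a := -(r + t)) (by linarith) 0
  rw [show (fun x => exp (-(r * x) + -(t * x))) = fun x => exp (-(r + t) * x) by ext; ring_nf, h]
  simp only [mul_zero, exp_zero]
  field_simp

lemma integral_max_sub_expMeasure (hr : 0 < r) {c : ℝ} (hc : 0 ≤ c) :
    ∫ y, max (c - y) 0 ∂expMeasure r = c - 1 / r + exp (-(r * c)) / r := by
  have hderiv : ∀ y ∈ uIcc 0 c, HasDerivAt (fun y => exp (-(r * y)) * (y - c + 1 / r))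
      (r * exp (-(r * y)) * (c - y)) y := by
    intro y _
    have hlin : HasDerivAt (fun y => -(r * y)) (-r) y := by
      simpa using (hasDerivAt_id y).const_mul (-r)
    refine (hlin.exp.mul (((hasDerivAt_id' y).sub_const c).add_const (1 / r))).congr_deriv ?_
    field_simp
    ring
  have hzero : ∀ y ∈ Ioi 0 \ Ioc 0 c, r * exp (-(r * y)) * max (c - y) 0 = 0 := by
    rintro y ⟨hy0, hyc⟩
    have : c < y := by simpa [mem_Ioi.mp hy0] using hyc
    rw [max_eq_right (by linarith), mul_zero]
  have hsupp : ∀ y ∈ Ioc 0 c,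
      r * exp (-(r * y)) * max (c - y) 0 = r * exp (-(r * y)) * (c - y) :=
    fun y hy => by rw [max_eq_left (by linarith [hy.2])]
  rw [integral_expMeasure_eq_setIntegral hr.le,
    setIntegral_eq_of_subset_of_forall_sdiff_eq_zero measurableSet_Ioi Ioc_subset_Ioi_self hzero,
    setIntegral_congr_fun measurableSet_Ioc hsupp, ← intervalIntegral.integral_of_le hc,
    intervalIntegral.integral_eq_sub_of_hasDerivAt hderiv
      ((by fun_prop : Continuous _).intervalIntegrable _ _)]
  simp only [mul_zero, neg_zero, exp_zero]
  ring

lemma map_eq_expMeasure_of_measureReal_Ioi {Ω : Type*} [MeasurableSpace Ω] {μ : Measure Ω}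
    [IsProbabilityMeasure μ] {X : Ω → ℝ} (hX : Measurable X) (hr : 0 < r)
    (htail : ∀ t : ℝ, 0 ≤ t → μ.real {ω | t < X ω} = exp (-r * t)) :
    μ.map X = expMeasure r := by
  have := isProbabilityMeasure_expMeasure hr
  have := Measure.isProbabilityMeasure_map (μ := μ) hX.aemeasurable
  refine Measure.eq_of_cdf _ _ (StieltjesFunction.ext fun x => ?_)
  have hpre : X ⁻¹' Iic x = {ω | x < X ω}ᶜ := by ext; simp
  rw [cdf_eq_real, cdf_expMeasure_eq hr, map_measureReal_apply hX measurableSet_Iic, hpre,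
    probReal_compl_eq_one_sub (measurableSet_lt measurable_const hX)]
  split_ifs with hx
  · rw [htail x hx, neg_mul]
  · have hpos : μ.real {ω | 0 < X ω} ≤ μ.real {ω | x < X ω} :=
      measureReal_mono fun ω (h : 0 < X ω) => (not_le.mp hx).trans h
    rw [htail 0 le_rfl, mul_zero, exp_zero] at hpos
    linarith [measureReal_le_one (μ := μ) (s := {ω | x < X ω})]

lemma setIntegral_setOf_nonneg_eq_integral_max {α : Type*} [MeasurableSpace α] {μ : Measure α}
    {f : α → ℝ} (hf : Measurable f) :
    ∫ x in {x | 0 ≤ f x}, f x ∂μ = ∫ x, max (f x) 0 ∂μ := by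
  rw [← integral_indicator (measurableSet_le measurable_const hf)]
  congr with x
  by_cases hx : 0 ≤ f x
  · rw [indicator_of_mem (s := {x | 0 ≤ f x}) hx, max_eq_left hx]
  · rw [indicator_of_notMem (s := {x | 0 ≤ f x}) hx, max_eq_right (not_le.mp hx).le]

lemma integral_max_add_sub_expMeasure_prod {β lam a : ℝ} (hβ : 0 < β) (hlam : 0 < lam)
    (ha : 0 ≤ a) :
    ∫ p, max (a + p.1 - p.2) 0 ∂(expMeasure β).prod (expMeasure lam)
      = β / (lam * (lam + β)) * exp (-(lam * a)) + a - 1 / lam + 1 / β := by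
  have := isProbabilityMeasure_expMeasure hβ
  have := isProbabilityMeasure_expMeasure hlam
  have hint : Integrable (fun p : ℝ × ℝ => max (a + p.1 - p.2) 0)
      ((expMeasure β).prod (expMeasure lam)) :=
    (((integrable_const a).add ((integrable_id_expMeasure hβ).comp_fst _)).sub
      ((integrable_id_expMeasure hlam).comp_snd _)).pos_part
  have hinner : ∀ᵐ x ∂expMeasure β, ∫ y, max (a + x - y) 0 ∂expMeasure lam
      = (a - 1 / lam) + x + exp (-(lam * a)) / lam * exp (-(lam * x)) :=
    ae_nonneg_expMeasure.mono fun x hx => by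
      rw [integral_max_sub_expMeasure hlam (by linarith),
        show -(lam * (a + x)) = -(lam * a) + -(lam * x) by ring, exp_add]
      ring
  rw [integral_prod _ hint, integral_congr_ae hinner,
    integral_add (f := fun x => a - 1 / lam + x)
      (g := fun x => exp (-(lam * a)) / lam * exp (-(lam * x)))
      ((integrable_const _).add (integrable_id_expMeasure hβ))
      ((integrable_exp_neg_mul_expMeasure hβ.le (by linarith)).const_mul _),
    integral_add (integrable_const _) (integrable_id_expMeasure hβ), integral_const,
    integral_const_mul, integral_id_expMeasure hβ,
    integral_exp_neg_mul_expMeasure hβ.le (by linarith)]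
  simp only [probReal_univ, one_smul]
  field_simp
  ring

end ProbabilityTheory

theorem cached_duration_deaf_ttl_le_off_general
    {Ω : Type*} [MeasurableSpace Ω] (μ : Measure Ω) [IsProbabilityMeasure μ]
    (s β lam : ℝ) (hβ : 0 < β) (hlam : 0 < lam)
    (E Y : Ω → ℝ) (hEm : Measurable E) (hYm : Measurable Y)
    (hE : ∀ t : ℝ, 0 ≤ t → (μ {o | t < E o}).toReal = Real.exp (-β * t))
    (hY : ∀ t : ℝ, 0 ≤ t → (μ {o | t < Y o}).toReal = Real.exp (-lam * t))
    (hEY : IndepFun E Y μ)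
    (w : ℝ) (hws : w ≤ s) :
    ∫ o in {o | Y o + w ≤ s + E o}, (s + E o - Y o - w) ∂μ
      = (β / (lam * (lam + β))) * Real.exp (-lam * (s - w)) + s - w - 1/lam + 1/β := by
  have hlaw : μ.map (fun o => (E o, Y o)) = (expMeasure β).prod (expMeasure lam) := by
    rw [(indepFun_iff_map_prod_eq_prod_map_map hEm.aemeasurable hYm.aemeasurable).mp hEY,
      map_eq_expMeasure_of_measureReal_Ioi hEm hβ hE,
      map_eq_expMeasure_of_measureReal_Ioi hYm hlam hY]
  have hset : {o | Y o + w ≤ s + E o} = {o | 0 ≤ s - w + E o - Y o} := by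
    ext o
    simp only [mem_ofPred_eq]
    constructor <;> intro h <;> linarith
  calc ∫ o in {o | Y o + w ≤ s + E o}, (s + E o - Y o - w) ∂μ
      = ∫ o in {o | 0 ≤ s - w + E o - Y o}, (s - w + E o - Y o) ∂μ := by
        rw [hset]
        congr with o
        ring
    _ = ∫ o, max (s - w + E o - Y o) 0 ∂μ :=
        setIntegral_setOf_nonneg_eq_integral_max (by fun_prop)
    _ = ∫ p, max (s - w + p.1 - p.2) 0 ∂(expMeasure β).prod (expMeasure lam) := by
        rw [← hlaw, integral_map (by fun_prop) (by fun_prop)]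
    _ = _ := by
        rw [integral_max_add_sub_expMeasure_prod hβ hlam (by linarith), neg_mul]
        ring

/-- Overhearing-only policy, case `0 ≤ ω ≤ s`: expected cached duration per renewal cycle
`E[(X - Y - ω)·1{Y + ω ≤ X}] = (β/(λ(λ+β)))·exp(-λ(s-ω)) + s - ω - 1/λ + 1/β`,
where `X = s + E`, `E ~ Exp(β)`, `Y ~ Exp(λ)` independent of `E`. -/
theorem cached_duration_deaf_ttl_le_off
    {Ω : Type*} [MeasurableSpace Ω] (μ : Measure Ω) [IsProbabilityMeasure μ]
    (s β lam : ℝ) (hs : 0 < s) (hβ : 0 < β) (hlam : 0 < lam)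
    (E Y : Ω → ℝ) (hEm : Measurable E) (hYm : Measurable Y)
    (hE : ∀ t : ℝ, 0 ≤ t → (μ {o | t < E o}).toReal = Real.exp (-β * t))
    (hY : ∀ t : ℝ, 0 ≤ t → (μ {o | t < Y o}).toReal = Real.exp (-lam * t))
    (hEY : IndepFun E Y μ)
    (w : ℝ) (hw0 : 0 ≤ w) (hws : w ≤ s) :
    ∫ o in {o | Y o + w ≤ s + E o}, (s + E o - Y o - w) ∂μ
      = (β / (lam * (lam + β))) * Real.exp (-lam * (s - w)) + s - w - 1/lam + 1/β :=
  cached_duration_deaf_ttl_le_off_general μ s β lam hβ hlam E Y hEm hYm hE hY hEY w hws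
end

section
/- Let s, β > 0 and X = s + E with E ~ Exp(β). Suppose the item can be overheard and loaded into cache at any deterministic time t ≥ 0 chosen by the policy, after which it stays until the next request X. Then for any t, the hit probability h = P(X ≥ t) and the occupancy r = E[(X - t)⁺]/E[X] satisfy h ≤ (βs + 1)·r, with equality when t = s. -/
/-!
Write `c = t - s`. Since `E[X] = s + 1/β`, the factor `(βs + 1)/E[X]` is just `β`, so the claim
becomes `P(E ≥ c) ≤ β · E[(E - c)⁺]`. For `c ≥ 0` the layer-cake formula gives
`E[(E - c)⁺] = ∫_c^∞ e^{-βu} du = e^{-βc}/β`, so both sides equal `e^{-βc}`; for `c < 0` the left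
side is `1` and the right side is `1 - βc`, because `E > 0` almost surely.
-/

open MeasureTheory Filter Set Topology

def HasExpTail {Ω : Type*} [MeasurableSpace Ω] (μ : Measure Ω) (β : ℝ) (E : Ω → ℝ) : Prop :=
  ∀ t : ℝ, 0 ≤ t → (μ {o | t < E o}).toReal = Real.exp (-β * t)

namespace HasExpTail

variable {Ω : Type*} [MeasurableSpace Ω] {μ : Measure Ω} {β : ℝ} {E : Ω → ℝ}

theorem ae_pos [IsProbabilityMeasure μ] (h : HasExpTail μ β E) (hEm : Measurable E) :
    ∀ᵐ o ∂μ, 0 < E o := by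
  have h_one : μ {o | 0 < E o} = 1 := by
    simpa [ENNReal.toReal_eq_one_iff] using h 0 le_rfl
  exact mem_ae_iff.2 ((prob_compl_eq_zero_iff (hEm measurableSet_Ioi)).2 h_one)

theorem toReal_measure_le_eq [IsFiniteMeasure μ] (h : HasExpTail μ β E) {u : ℝ} (hu : 0 < u) :
    (μ {o | u ≤ E o}).toReal = Real.exp (-β * u) := by
  refine le_antisymm ?_ ?_
  · -- `{u ≤ E} ⊆ {v < E}` for every `v < u`, and the right tail is continuous in `v`.
    have h_cont : Tendsto (fun v => Real.exp (-β * v)) (𝓝[<] u) (𝓝 (Real.exp (-β * u))) :=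
      (by fun_prop : Continuous fun v => Real.exp (-β * v)).continuousWithinAt
    refine ge_of_tendsto h_cont ?_
    filter_upwards [Ioo_mem_nhdsLT hu] with v hv
    rw [← h v hv.1.le]
    exact ENNReal.toReal_mono (measure_ne_top μ _)
      (measure_mono fun o (ho : u ≤ E o) => hv.2.trans_le ho)
  · rw [← h u hu.le]
    exact ENNReal.toReal_mono (measure_ne_top μ _) (measure_mono fun o (ho : u < E o) => ho.le)

theorem lintegral_max_sub [IsFiniteMeasure μ] (h : HasExpTail μ β E) (hβ : 0 < β)
    (hEm : Measurable E) {c : ℝ} (hc : 0 ≤ c) :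
    ∫⁻ o, ENNReal.ofReal (max (E o - c) 0) ∂μ = ENNReal.ofReal (Real.exp (-β * c) / β) := by
  have h_tail : ∀ u ∈ Ioi (0 : ℝ), μ {o | u < max (E o - c) 0}
      = ENNReal.ofReal (Real.exp (-β * c) * Real.exp (-β * u)) := by
    intro u (hu : 0 < u)
    have h_set : {o | u < max (E o - c) 0} = {o | u + c < E o} := by
      ext o
      simp only [mem_ofPred_eq, lt_max_iff, hu.not_gt, or_false]
      constructor <;> intro <;> linarith
    rw [h_set, ← ENNReal.ofReal_toReal (measure_ne_top μ _), h (u + c) (by linarith),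
      ← Real.exp_add]
    ring_nf
  have h_int : IntegrableOn (fun u => Real.exp (-β * c) * Real.exp (-β * u)) (Ioi 0) :=
    (integrableOn_exp_mul_Ioi (neg_lt_zero.2 hβ) 0).const_mul _
  rw [lintegral_eq_lintegral_meas_lt μ (.of_forall fun o => le_max_right (E o - c) 0)
      (by fun_prop : Measurable fun o => max (E o - c) 0).aemeasurable,
    setLIntegral_congr_fun measurableSet_Ioi h_tail,
    ← ofReal_integral_eq_lintegral_ofReal h_int (.of_forall fun u => by positivity),
    integral_const_mul, integral_exp_mul_Ioi (neg_lt_zero.2 hβ)]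
  simp [div_eq_mul_inv]

theorem integrable_max_sub [IsFiniteMeasure μ] (h : HasExpTail μ β E) (hβ : 0 < β)
    (hEm : Measurable E) {c : ℝ} (hc : 0 ≤ c) :
    Integrable (fun o => max (E o - c) 0) μ :=
  ⟨(by fun_prop : Measurable fun o => max (E o - c) 0).aestronglyMeasurable,
    (hasFiniteIntegral_iff_ofReal (.of_forall fun o => le_max_right (E o - c) 0)).2 <| by
      rw [h.lintegral_max_sub hβ hEm hc]; exact ENNReal.ofReal_lt_top⟩

theorem integral_max_sub [IsFiniteMeasure μ] (h : HasExpTail μ β E) (hβ : 0 < β)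
    (hEm : Measurable E) {c : ℝ} (hc : 0 ≤ c) :
    ∫ o, max (E o - c) 0 ∂μ = Real.exp (-β * c) / β := by
  rw [integral_eq_lintegral_of_nonneg_ae (.of_forall fun o => le_max_right (E o - c) 0)
      (by fun_prop : Measurable fun o => max (E o - c) 0).aestronglyMeasurable,
    h.lintegral_max_sub hβ hEm hc, ENNReal.toReal_ofReal (by positivity)]

theorem integral_max_sub_of_nonpos [IsProbabilityMeasure μ] (h : HasExpTail μ β E)
    (hβ : 0 < β) (hEm : Measurable E) {c : ℝ} (hc : c ≤ 0) :
    ∫ o, max (E o - c) 0 ∂μ = 1 / β - c := by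
  have h_ae : (fun o => max (E o - c) 0) =ᵐ[μ] fun o => max (E o - 0) 0 + -c := by
    filter_upwards [h.ae_pos hEm] with o ho
    rw [max_eq_left (by linarith), max_eq_left (by linarith)]
    ring
  rw [integral_congr_ae h_ae, integral_add (h.integrable_max_sub hβ hEm le_rfl)
    (integrable_const _), h.integral_max_sub hβ hEm le_rfl]
  simp [sub_eq_add_neg]

theorem toReal_measure_le_of_nonpos [IsProbabilityMeasure μ] (h : HasExpTail μ β E)
    (hEm : Measurable E) {c : ℝ} (hc : c ≤ 0) :
    (μ {o | c ≤ E o}).toReal = 1 := by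
  have h_ae : ∀ᵐ o ∂μ, c ≤ E o := by
    filter_upwards [h.ae_pos hEm] with o ho using by linarith
  rw [(ae_iff_measure_eq (measurableSet_le measurable_const hEm).nullMeasurableSet).1 h_ae,
    measure_univ, ENNReal.toReal_one]

theorem toReal_measure_le_eq_mul_integral [IsProbabilityMeasure μ] (h : HasExpTail μ β E)
    (hβ : 0 < β) (hEm : Measurable E) {c : ℝ} (hc : 0 ≤ c) :
    (μ {o | c ≤ E o}).toReal = β * ∫ o, max (E o - c) 0 ∂μ := by
  rw [h.integral_max_sub hβ hEm hc, mul_div_cancel₀ _ hβ.ne']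
  rcases hc.eq_or_lt with rfl | hc
  · simp [h.toReal_measure_le_of_nonpos hEm le_rfl]
  · exact h.toReal_measure_le_eq hc

theorem toReal_measure_le_le_mul_integral [IsProbabilityMeasure μ] (h : HasExpTail μ β E)
    (hβ : 0 < β) (hEm : Measurable E) (c : ℝ) :
    (μ {o | c ≤ E o}).toReal ≤ β * ∫ o, max (E o - c) 0 ∂μ := by
  rcases le_total 0 c with hc | hc
  · exact (h.toReal_measure_le_eq_mul_integral hβ hEm hc).le
  · rw [h.toReal_measure_le_of_nonpos hEm hc, h.integral_max_sub_of_nonpos hβ hEm hc,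
      mul_sub, mul_one_div_cancel hβ.ne']
    nlinarith

end HasExpTail

/-- Idealized insertion-at-time-`t` policy: with `X = s + E`, `E ~ Exp(β)`,
the hit probability `h = P(X ≥ t)` and occupancy `r = E[(X-t)⁺]/E[X]`
satisfy `h ≤ (βs+1)·r` for every `t ≥ 0`, with equality when `t = s`. -/
theorem idealized_policy_efficiency_bound
    {Ω : Type*} [MeasurableSpace Ω] (μ : Measure Ω) [IsProbabilityMeasure μ]
    (s β : ℝ) (hs : 0 < s) (hβ : 0 < β)
    (E : Ω → ℝ) (hEm : Measurable E)
    (hE : ∀ t : ℝ, 0 ≤ t → (μ {o | t < E o}).toReal = Real.exp (-β * t)) :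
    (∀ t : ℝ, 0 ≤ t →
        (μ {o | t ≤ s + E o}).toReal
          ≤ (β * s + 1) * ((∫ o, max (s + E o - t) 0 ∂μ) / (s + 1/β))) ∧
    (μ {o | s ≤ s + E o}).toReal
      = (β * s + 1) * ((∫ o, max (s + E o - s) 0 ∂μ) / (s + 1/β)) := by
  have hE : HasExpTail μ β E := hE
  have h_hit (t : ℝ) : {o | t ≤ s + E o} = {o | t - s ≤ E o} :=
    Set.ext fun o => (sub_le_iff_le_add' (a := t)).symm
  have h_occupancy (t : ℝ) :
      (β * s + 1) * ((∫ o, max (s + E o - t) 0 ∂μ) / (s + 1/β))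
        = β * ∫ o, max (E o - (t - s)) 0 ∂μ := by
    simp_rw [sub_sub_eq_add_sub, add_comm s]
    field_simp
    ring
  refine ⟨fun t _ => ?_, ?_⟩
  · rw [h_hit, h_occupancy]
    exact hE.toReal_measure_le_le_mul_integral hβ hEm (t - s)
  · rw [h_hit, h_occupancy, sub_self]
    exact hE.toReal_measure_le_eq_mul_integral hβ hEm le_rfl
end

section
/- Let N ∈ ℕ, b > 1, and let f_i : [0,1] → [0,1] be the piecewise linear functions f_i(r) = a_i·r for 0 ≤ r ≤ c_i and f_i(r) = 1 + m_i·(r − 1) for c_i ≤ r ≤ 1, where a_i = 1/c_i · f_i(c_i) with f_i(c_i) = a_i c_i < 1 and m_i = (1 − a_i c_i)/(1 − c_i); each f_i is convex. Then any optimal solution r* of max ∑_i w_i f_i(r_i) subject to 0 ≤ r_i ≤ 1, ∑_i r_i ≤ b (with weights w_i > 0) can be chosen so that at most one index i has r_i* ∉ {0, c_i, 1}. -/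
/-!
Each `f i` is affine on `[0, c i]` and on `[c i, 1]`. If two coordinates `i ≠ j` of an optimal
`r` both lie strictly inside such pieces, moving mass `t` from `j` to `i` keeps the total and
changes the objective by `t * (w i * m i - w j * m j)`, where `m` are the slopes of the pieces,
for all `t` of either sign small enough. Optimality forces this slope difference to vanish, so
the mass can be moved until one of the two coordinates reaches an endpoint of its piece without
changing the value. Each such move removes a coordinate from the set of those off
`{0, c i, 1}`, and the moved vector is again optimal among vectors of the same total.
-/

open Finset Function

def InAffinePiece (φ : ℝ → ℝ) (K B : Set ℝ) (x : ℝ) : Prop :=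
  ∃ lo hi m : ℝ, lo ∈ B ∧ hi ∈ B ∧ lo < x ∧ x < hi ∧ Set.Icc lo hi ⊆ K ∧
    ∀ y ∈ Set.Icc lo hi, φ y = φ x + m * (y - x)

theorem InAffinePiece.const_mul {φ : ℝ → ℝ} {K B : Set ℝ} {x : ℝ} (h : InAffinePiece φ K B x)
    (w : ℝ) : InAffinePiece (fun y => w * φ y) K B x := by
  obtain ⟨lo, hi, m, hlo, hhi, hlox, hxhi, hK, hφ⟩ := h
  exact ⟨lo, hi, w * m, hlo, hhi, hlox, hxhi, hK, fun y hy => by beta_reduce; rw [hφ y hy]; ring⟩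

theorem inAffinePiece_hinge {a c x : ℝ} (hc0 : 0 ≤ c) (hc1 : c < 1) (hx : x ∈ Set.Icc (0 : ℝ) 1)
    (hxB : x ∉ ({0, c, 1} : Set ℝ)) :
    InAffinePiece (fun r => if r ≤ c then a * r else 1 + ((1 - a * c) / (1 - c)) * (r - 1))
      (Set.Icc 0 1) {0, c, 1} x := by
  simp only [Set.mem_insert_iff, Set.mem_singleton_iff, not_or] at hxB
  obtain ⟨hx0, hxc, hx1⟩ := hxB
  rcases lt_or_gt_of_ne hxc with hxc | hcx
  · refine ⟨0, c, a, by simp, by simp, lt_of_le_of_ne hx.1 (Ne.symm hx0), hxc,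
      Set.Icc_subset_Icc le_rfl hc1.le, fun y hy => ?_⟩
    simp only [if_pos hy.2, if_pos hxc.le]
    ring
  · refine ⟨c, 1, (1 - a * c) / (1 - c), by simp, by simp, hcx, lt_of_le_of_ne hx.2 hx1,
      Set.Icc_subset_Icc hc0 le_rfl, fun y hy => ?_⟩
    have : 1 - c ≠ 0 := sub_ne_zero.2 hc1.ne'
    rcases hy.1.eq_or_lt with rfl | hcy
    · simp only [le_refl, if_true, if_neg hcx.not_ge]
      field_simp
      ring
    · simp only [if_neg hcy.not_ge, if_neg hcx.not_ge]
      ring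

section Exchange

variable {ι : Type*}

noncomputable def offBreakpoints (s : Finset ι) (B : ι → Set ℝ) (r : ι → ℝ) : Finset ι := by
  classical exact s.filter fun k => r k ∉ B k

theorem mem_offBreakpoints {s : Finset ι} {B : ι → Set ℝ} {r : ι → ℝ} {k : ι} :
    k ∈ offBreakpoints s B r ↔ k ∈ s ∧ r k ∉ B k := by
  classical
  unfold offBreakpoints
  convert mem_filter

variable [DecidableEq ι]

theorem sum_comp_update (s : Finset ι) (φ : ι → ℝ → ℝ) (v : ι → ℝ) {j : ι} (hj : j ∈ s)
    (x : ℝ) :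
    ∑ k ∈ s, φ k (update v j x k) = ∑ k ∈ s, φ k (v k) + (φ j x - φ j (v j)) := by
  have herase : ∑ k ∈ s.erase j, φ k (update v j x k) = ∑ k ∈ s.erase j, φ k (v k) :=
    sum_congr rfl fun k hk => by rw [update_of_ne (ne_of_mem_erase hk)]
  rw [← add_sum_erase s _ hj, ← add_sum_erase s (fun k => φ k (v k)) hj, herase, update_self]
  ring

def transfer (r : ι → ℝ) (i j : ι) (t : ℝ) : ι → ℝ :=
  update (update r i (r i + t)) j (r j - t)

theorem transfer_apply_left (r : ι → ℝ) {i j : ι} (hij : i ≠ j) (t : ℝ) :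
    transfer r i j t i = r i + t := by
  simp [transfer, update_of_ne hij]

theorem transfer_apply_right (r : ι → ℝ) (i j : ι) (t : ℝ) : transfer r i j t j = r j - t := by
  simp [transfer]

theorem transfer_apply_of_ne (r : ι → ℝ) {i j k : ι} (hki : k ≠ i) (hkj : k ≠ j) (t : ℝ) :
    transfer r i j t k = r k := by
  simp [transfer, update_of_ne hki, update_of_ne hkj]

theorem sum_comp_transfer (s : Finset ι) (φ : ι → ℝ → ℝ) (r : ι → ℝ) {i j : ι} (hi : i ∈ s)
    (hj : j ∈ s) (hij : i ≠ j) (t : ℝ) :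
    ∑ k ∈ s, φ k (transfer r i j t k) =
      ∑ k ∈ s, φ k (r k) + (φ i (r i + t) - φ i (r i)) + (φ j (r j - t) - φ j (r j)) := by
  rw [transfer, sum_comp_update s φ _ hj, sum_comp_update s φ _ hi, update_of_ne hij.symm]

theorem sum_transfer (s : Finset ι) (r : ι → ℝ) {i j : ι} (hi : i ∈ s) (hj : j ∈ s)
    (hij : i ≠ j) (t : ℝ) : ∑ k ∈ s, transfer r i j t k = ∑ k ∈ s, r k := by
  rw [sum_comp_transfer s (fun _ x => x) r hi hj hij t]
  ring

theorem transfer_mem (s : Finset ι) (K : ι → Set ℝ) {r : ι → ℝ} (hr : ∀ k ∈ s, r k ∈ K k)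
    {i j : ι} (hij : i ≠ j) {t : ℝ} (hti : r i + t ∈ K i) (htj : r j - t ∈ K j) :
    ∀ k ∈ s, transfer r i j t k ∈ K k := by
  intro k hk
  by_cases hki : k = i
  · subst hki; rwa [transfer_apply_left r hij]
  by_cases hkj : k = j
  · subst hkj; rwa [transfer_apply_right]
  rw [transfer_apply_of_ne r hki hkj]
  exact hr k hk

theorem offBreakpoints_transfer_subset {s : Finset ι} {B : ι → Set ℝ} {r : ι → ℝ} {i j : ι}
    (hi : i ∈ offBreakpoints s B r) (hj : j ∈ offBreakpoints s B r) (t : ℝ) :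
    offBreakpoints s B (transfer r i j t) ⊆ offBreakpoints s B r := by
  intro k hk
  by_cases hki : k = i
  · exact hki ▸ hi
  by_cases hkj : k = j
  · exact hkj ▸ hj
  rw [mem_offBreakpoints, transfer_apply_of_ne r hki hkj] at hk
  exact mem_offBreakpoints.2 hk

variable (s : Finset ι) (g : ι → ℝ → ℝ) (K B : ι → Set ℝ)

theorem exists_transfer_offBreakpoints_ssubset {r : ι → ℝ} (hr : ∀ k ∈ s, r k ∈ K k)
    (hopt : ∀ r' : ι → ℝ, (∀ k ∈ s, r' k ∈ K k) → ∑ k ∈ s, r' k = ∑ k ∈ s, r k →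
      ∑ k ∈ s, g k (r' k) ≤ ∑ k ∈ s, g k (r k))
    {i j : ι} (hi : i ∈ offBreakpoints s B r) (hj : j ∈ offBreakpoints s B r) (hij : i ≠ j)
    (hpi : InAffinePiece (g i) (K i) (B i) (r i)) (hpj : InAffinePiece (g j) (K j) (B j) (r j)) :
    ∃ r' : ι → ℝ, (∀ k ∈ s, r' k ∈ K k) ∧ ∑ k ∈ s, r' k = ∑ k ∈ s, r k ∧
      ∑ k ∈ s, g k (r' k) = ∑ k ∈ s, g k (r k) ∧
      offBreakpoints s B r' ⊂ offBreakpoints s B r := by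
  have his := (mem_offBreakpoints.1 hi).1
  have hjs := (mem_offBreakpoints.1 hj).1
  obtain ⟨li, ui, mi, -, huiB, hli, hui, hKi, hgi⟩ := hpi
  obtain ⟨lj, uj, mj, hljB, -, hlj, huj, hKj, hgj⟩ := hpj
  -- the admissible shifts are `t ∈ [-tm, tp]`
  set tp := min (ui - r i) (r j - lj)
  set tm := min (r i - li) (uj - r j)
  have htp : 0 < tp := lt_min (by linarith) (by linarith)
  have htm : 0 < tm := lt_min (by linarith) (by linarith)
  have hmemi : ∀ t ∈ Set.Icc (-tm) tp, r i + t ∈ Set.Icc li ui := fun t ht =>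
    ⟨by linarith [ht.1, min_le_left (r i - li) (uj - r j)],
      by linarith [ht.2, min_le_left (ui - r i) (r j - lj)]⟩
  have hmemj : ∀ t ∈ Set.Icc (-tm) tp, r j - t ∈ Set.Icc lj uj := fun t ht =>
    ⟨by linarith [ht.2, min_le_right (ui - r i) (r j - lj)],
      by linarith [ht.1, min_le_right (r i - li) (uj - r j)]⟩
  have hfeas : ∀ t ∈ Set.Icc (-tm) tp, ∀ k ∈ s, transfer r i j t k ∈ K k := fun t ht =>
    transfer_mem s K hr hij (hKi (hmemi t ht)) (hKj (hmemj t ht))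
  have hvalue : ∀ t ∈ Set.Icc (-tm) tp,
      ∑ k ∈ s, g k (transfer r i j t k) = ∑ k ∈ s, g k (r k) + t * (mi - mj) := by
    intro t ht
    rw [sum_comp_transfer s g r his hjs hij, hgi _ (hmemi t ht), hgj _ (hmemj t ht)]
    ring
  have hslope : mi = mj := by
    have hplus := hopt _ (hfeas tp ⟨by linarith, le_rfl⟩) (sum_transfer s r his hjs hij tp)
    have hminus := hopt _ (hfeas (-tm) ⟨le_rfl, by linarith⟩) (sum_transfer s r his hjs hij _)
    rw [hvalue tp ⟨by linarith, le_rfl⟩] at hplus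
    rw [hvalue (-tm) ⟨le_rfl, by linarith⟩] at hminus
    nlinarith
  refine ⟨transfer r i j tp, hfeas tp ⟨by linarith, le_rfl⟩, sum_transfer s r his hjs hij tp,
    by rw [hvalue tp ⟨by linarith, le_rfl⟩, hslope, sub_self, mul_zero, add_zero], ?_⟩
  rw [ssubset_iff_of_subset (offBreakpoints_transfer_subset hi hj tp)]
  -- the shift by `tp` lands `i` on `ui` or `j` on `lj`
  obtain htp_eq | htp_eq : tp = ui - r i ∨ tp = r j - lj := min_choice _ _
  · refine ⟨i, hi, fun h => (mem_offBreakpoints.1 h).2 ?_⟩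
    rwa [transfer_apply_left r hij, htp_eq, add_sub_cancel]
  · refine ⟨j, hj, fun h => (mem_offBreakpoints.1 h).2 ?_⟩
    rwa [transfer_apply_right, htp_eq, sub_sub_cancel]

theorem exists_subsingleton_offBreakpoints {r : ι → ℝ} (hr : ∀ k ∈ s, r k ∈ K k)
    (hopt : ∀ r' : ι → ℝ, (∀ k ∈ s, r' k ∈ K k) → ∑ k ∈ s, r' k = ∑ k ∈ s, r k →
      ∑ k ∈ s, g k (r' k) ≤ ∑ k ∈ s, g k (r k))
    (hpiece : ∀ k ∈ s, ∀ x ∈ K k, x ∉ B k → InAffinePiece (g k) (K k) (B k) x) :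
    ∃ r' : ι → ℝ, (∀ k ∈ s, r' k ∈ K k) ∧ ∑ k ∈ s, r' k = ∑ k ∈ s, r k ∧
      ∑ k ∈ s, g k (r' k) = ∑ k ∈ s, g k (r k) ∧
      (offBreakpoints s B r' : Set ι).Subsingleton := by
  induction hn : (offBreakpoints s B r).card using Nat.strong_induction_on generalizing r with
  | _ n ih =>
  by_cases hcard : (offBreakpoints s B r).card ≤ 1
  · exact ⟨r, hr, rfl, rfl, card_le_one_iff_subsingleton.1 hcard⟩
  obtain ⟨i, hi, j, hj, hij⟩ := one_lt_card.1 (not_le.1 hcard)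
  have hpoint : ∀ k ∈ offBreakpoints s B r, InAffinePiece (g k) (K k) (B k) (r k) := fun k hk =>
    have hk := mem_offBreakpoints.1 hk
    hpiece k hk.1 _ (hr k hk.1) hk.2
  obtain ⟨r₁, hr₁, hsum₁, hval₁, hss⟩ := exists_transfer_offBreakpoints_ssubset s g K B hr hopt
    hi hj hij (hpoint i hi) (hpoint j hj)
  obtain ⟨r', hr', hsum', hval', hsing⟩ := ih _ (hn ▸ card_lt_card hss) hr₁
    (fun r' hr' hs => hval₁ ▸ hopt r' hr' (hs.trans hsum₁)) rfl
  exact ⟨r', hr', hsum'.trans hsum₁, hval'.trans hval₁, hsing⟩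

end Exchange

theorem optimal_solution_structure_general
    (N : ℕ) (b : ℝ)
    (c a w : ℕ → ℝ)
    (hc : ∀ i < N, 0 < c i ∧ c i < 1)
    (f : ℕ → ℝ → ℝ)
    (hf : ∀ i, f i = fun r => if r ≤ c i then a i * r
        else 1 + ((1 - a i * c i) / (1 - c i)) * (r - 1))
    (r : ℕ → ℝ)
    (hr : ∀ i < N, r i ∈ Set.Icc (0 : ℝ) 1)
    (hrb : ∑ i ∈ range N, r i ≤ b)
    (hopt : ∀ r' : ℕ → ℝ, (∀ i < N, r' i ∈ Set.Icc (0 : ℝ) 1) →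
        ∑ i ∈ range N, r' i ≤ b →
        ∑ i ∈ range N, w i * f i (r' i) ≤ ∑ i ∈ range N, w i * f i (r i)) :
    ∃ r' : ℕ → ℝ,
      (∀ i < N, r' i ∈ Set.Icc (0 : ℝ) 1) ∧
      (∑ i ∈ range N, r' i ≤ b) ∧
      (∑ i ∈ range N, w i * f i (r' i) = ∑ i ∈ range N, w i * f i (r i)) ∧
      {i | i < N ∧ r' i ≠ 0 ∧ r' i ≠ c i ∧ r' i ≠ 1}.Subsingleton := by
  have hpiece : ∀ k ∈ range N, ∀ x ∈ Set.Icc (0 : ℝ) 1, x ∉ ({0, c k, 1} : Set ℝ) →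
      InAffinePiece (fun x => w k * f k x) (Set.Icc 0 1) {0, c k, 1} x := by
    intro k hk x hx hxB
    have hck := hc k (mem_range.1 hk)
    rw [hf k]
    exact (inAffinePiece_hinge hck.1.le hck.2 hx hxB).const_mul (w k)
  obtain ⟨r', hr', hsum, hval, hsing⟩ := exists_subsingleton_offBreakpoints (range N)
    (fun k x => w k * f k x) (fun _ => Set.Icc 0 1) (fun k => {0, c k, 1}) (r := r)
    (fun k hk => hr k (mem_range.1 hk))
    (fun r' hr' hs => hopt r' (fun k hk => hr' k (mem_range.2 hk)) (hs ▸ hrb)) hpiece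
  refine ⟨r', fun k hk => hr' k (mem_range.2 hk), hsum ▸ hrb, hval, ?_⟩
  convert hsing using 1
  ext k
  simp [mem_offBreakpoints]

/-- Structural KKT consequence for the piecewise-linear convex objective:
an optimal occupancy vector can be chosen with at most one coordinate
outside `{0, c i, 1}`. -/
theorem optimal_solution_structure
    (N : ℕ) (b : ℝ) (hb : 1 < b)
    (c a w : ℕ → ℝ)
    (hc : ∀ i < N, 0 < c i ∧ c i < 1)
    (ha : ∀ i < N, 0 < a i)
    (hac : ∀ i < N, a i * c i < 1)
    (hw : ∀ i < N, 0 < w i)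
    (f : ℕ → ℝ → ℝ)
    (hf : ∀ i, f i = fun r => if r ≤ c i then a i * r
        else 1 + ((1 - a i * c i) / (1 - c i)) * (r - 1))
    (r : ℕ → ℝ)
    (hr : ∀ i < N, r i ∈ Set.Icc (0 : ℝ) 1)
    (hrb : ∑ i ∈ range N, r i ≤ b)
    (hopt : ∀ r' : ℕ → ℝ, (∀ i < N, r' i ∈ Set.Icc (0 : ℝ) 1) →
        ∑ i ∈ range N, r' i ≤ b →
        ∑ i ∈ range N, w i * f i (r' i) ≤ ∑ i ∈ range N, w i * f i (r i)) :
    ∃ r' : ℕ → ℝ,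
      (∀ i < N, r' i ∈ Set.Icc (0 : ℝ) 1) ∧
      (∑ i ∈ range N, r' i ≤ b) ∧
      (∑ i ∈ range N, w i * f i (r' i) = ∑ i ∈ range N, w i * f i (r i)) ∧
      {i | i < N ∧ r' i ≠ 0 ∧ r' i ≠ c i ∧ r' i ≠ 1}.Subsingleton :=
  optimal_solution_structure_general N b c a w hc f hf r hr hrb hopt
end

section
/- Let s, β > 0 and X = s + E with E ~ Exp(β). For every τ ∈ [0, ∞], let h_c(τ) = P(X ≤ τ) and r_c(τ) = E[min(X, τ)]/E[X]. Then h_c(τ) ≤ (βs+1)·r_c(τ) for all τ ≥ 0, with equality failing for τ > s. -/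
open MeasureTheory Filter

/-- Caching-only policy is never more efficient than the idealized slope `βs+1`:
with `X = s + E`, `E ~ Exp(β)`, `h_c(τ) = P(X ≤ τ)`, `r_c(τ) = E[min(X,τ)]/E[X]`,
we have `h_c(τ) ≤ (βs+1)·r_c(τ)` for all `τ ≥ 0`, with strict inequality for `τ > s`. -/
theorem caching_only_efficiency_bound
    {Ω : Type*} [MeasurableSpace Ω] (μ : Measure Ω) [IsProbabilityMeasure μ]
    (s β : ℝ) (hs : 0 < s) (hβ : 0 < β)
    (E : Ω → ℝ) (hEm : Measurable E)
    (hE : ∀ t : ℝ, 0 ≤ t → (μ {o | t < E o}).toReal = Real.exp (-β * t)) :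
    (∀ τ : ℝ, 0 ≤ τ →
      (μ {o | s + E o ≤ τ}).toReal
        ≤ (β * s + 1) * ((∫ o, min (s + E o) τ ∂μ) / (s + 1/β))) ∧
    (∀ τ : ℝ, s < τ →
      (μ {o | s + E o ≤ τ}).toReal
        < (β * s + 1) * ((∫ o, min (s + E o) τ ∂μ) / (s + 1/β))) := by
  have hβ' : β ≠ 0 := ne_of_gt hβ
  have hXm : Measurable fun o => s + E o := measurable_const.add hEm
  -- E is positive a.e.
  have hE1 : μ {o | 0 < E o} = 1 := by
    rw [← ENNReal.toReal_eq_one_iff]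
    simpa using hE 0 le_rfl
  have hEpos : ∀ᵐ o ∂μ, 0 < E o := by
    have hm : MeasurableSet {o | 0 < E o} := measurableSet_lt measurable_const hEm
    have : μ {o | 0 < E o}ᶜ = 0 := (prob_compl_eq_zero_iff hm).2 hE1
    filter_upwards [measure_eq_zero_iff_ae_notMem.mp this] with o ho
    simpa using ho
  -- tail probability for all t
  have tail : ∀ t : ℝ, (μ {o | t < s + E o}).toReal = Real.exp (-β * max (t - s) 0) := by
    intro t
    rcases le_or_gt s t with h | h
    · have hset : {o | t < s + E o} = {o | t - s < E o} := by
        ext o; simp only [Set.mem_setOf_eq]; constructor <;> intro <;> linarith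
      rw [hset, hE (t - s) (by linarith), max_eq_left (by linarith)]
    · have hsub : {o | 0 < E o} ⊆ {o | t < s + E o} := by
        intro o ho; simp only [Set.mem_setOf_eq] at *; linarith
      have h1 : μ {o | t < s + E o} = 1 :=
        le_antisymm prob_le_one (hE1 ▸ measure_mono hsub)
      rw [h1, max_eq_right (by linarith), mul_zero, Real.exp_zero, ENNReal.toReal_one]
  -- probability of hit
  have probB : ∀ τ : ℝ, (μ {o | s + E o ≤ τ}).toReal
      = 1 - Real.exp (-β * max (τ - s) 0) := by
    intro τ
    have hA : MeasurableSet {o | τ < s + E o} := measurableSet_lt measurable_const hXm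
    have hc : {o | s + E o ≤ τ} = {o | τ < s + E o}ᶜ := by
      ext o; simp [not_lt]
    rw [hc, prob_compl_eq_one_sub hA,
      ENNReal.toReal_sub_of_le prob_le_one ENNReal.one_ne_top, ENNReal.toReal_one, tail τ]
  -- the key integral computation
  have key : ∀ τ : ℝ, 0 ≤ τ → (∫ o, min (s + E o) τ ∂μ)
      = min τ s + (1 - Real.exp (-β * max (τ - s) 0)) / β := by
    intro τ hτ
    have hfm : Measurable fun o => min (s + E o) τ := hXm.min measurable_const
    have hf_nn : 0 ≤ᵐ[μ] fun o => min (s + E o) τ := by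
      filter_upwards [hEpos] with o ho
      simp only [Pi.zero_apply]
      exact le_min (by linarith) hτ
    have hf_int : Integrable (fun o => min (s + E o) τ) μ := by
      apply Integrable.mono' (integrable_const τ) hfm.aestronglyMeasurable
      filter_upwards [hf_nn] with o ho
      rw [Real.norm_eq_abs, abs_of_nonneg ho]
      exact min_le_right _ _
    rw [hf_int.integral_eq_integral_meas_lt hf_nn]
    have hptwise : Set.EqOn (fun t => (μ {a | t < min (s + E a) τ}).toReal)
        (fun t => Set.indicator (Set.Ioo 0 τ)
          (fun t => Real.exp (-β * max (t - s) 0)) t) (Set.Ioi 0) := by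
      intro t ht
      simp only [Set.mem_Ioi] at ht
      rcases lt_or_ge t τ with h | h
      · have hset : {a | t < min (s + E a) τ} = {a | t < s + E a} := by
          ext a; simp only [Set.mem_setOf_eq, lt_min_iff]
          exact ⟨fun hh => hh.1, fun hh => ⟨hh, h⟩⟩
        simp only [hset, tail t, Set.indicator_of_mem (Set.mem_Ioo.mpr ⟨ht, h⟩)]
      · have hset : {a | t < min (s + E a) τ} = (∅ : Set Ω) := by
          ext a; simp only [Set.mem_setOf_eq, lt_min_iff, Set.mem_empty_iff_false, iff_false]
          intro hh; exact absurd hh.2 (not_lt.mpr h)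
        have hni : t ∉ Set.Ioo 0 τ := fun hmem => absurd hmem.2 (not_lt.mpr h)
        simp only [hset, Set.indicator_of_notMem hni, measure_empty, ENNReal.toReal_zero]
    simp only [measureReal_def]
    rw [setIntegral_congr_fun measurableSet_Ioi hptwise,
      setIntegral_indicator measurableSet_Ioo]
    have hinter : Set.Ioi (0:ℝ) ∩ Set.Ioo 0 τ = Set.Ioo 0 τ := by
      apply Set.inter_eq_self_of_subset_right
      exact Set.Ioo_subset_Ioi_self
    rw [hinter, ← integral_Ioc_eq_integral_Ioo, ← intervalIntegral.integral_of_le hτ]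
    -- now compute the interval integral
    have hcont : Continuous fun t : ℝ => Real.exp (-β * max (t - s) 0) :=
      (continuous_const.mul ((continuous_id.sub continuous_const).max continuous_const)).rexp
    rcases le_or_gt τ s with h | h
    · have : ∫ t in (0:ℝ)..τ, Real.exp (-β * max (t - s) 0)
          = ∫ t in (0:ℝ)..τ, (1:ℝ) := by
        apply intervalIntegral.integral_congr
        intro t htmem
        rw [Set.uIcc_of_le hτ] at htmem
        have : max (t - s) 0 = 0 := max_eq_right (by linarith [htmem.2])
        simp [this]
      rw [this]
      rw [max_eq_right (by linarith), min_eq_left h]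
      simp
    · have hsplit : (∫ t in (0:ℝ)..s, Real.exp (-β * max (t - s) 0))
          + ∫ t in s..τ, Real.exp (-β * max (t - s) 0)
          = ∫ t in (0:ℝ)..τ, Real.exp (-β * max (t - s) 0) :=
        intervalIntegral.integral_add_adjacent_intervals
          (hcont.intervalIntegrable _ _) (hcont.intervalIntegrable _ _)
      rw [← hsplit]
      have h1 : ∫ t in (0:ℝ)..s, Real.exp (-β * max (t - s) 0) = s := by
        have : ∫ t in (0:ℝ)..s, Real.exp (-β * max (t - s) 0)
            = ∫ t in (0:ℝ)..s, (1:ℝ) := by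
          apply intervalIntegral.integral_congr
          intro t htmem
          rw [Set.uIcc_of_le hs.le] at htmem
          have : max (t - s) 0 = 0 := max_eq_right (by linarith [htmem.2])
          simp [this]
        rw [this]; simp
      have h2 : ∫ t in s..τ, Real.exp (-β * max (t - s) 0)
          = (1 - Real.exp (-β * (τ - s))) / β := by
        have hcongr : ∫ t in s..τ, Real.exp (-β * max (t - s) 0)
            = ∫ t in s..τ, Real.exp (-β * (t - s)) := by
          apply intervalIntegral.integral_congr
          intro t htmem
          rw [Set.uIcc_of_le h.le] at htmem
          have : max (t - s) 0 = t - s := max_eq_left (by linarith [htmem.1])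
          simp [this]
        rw [hcongr]
        have hderiv : ∀ t ∈ Set.uIcc s τ,
            HasDerivAt (fun t => -Real.exp (-β * (t - s)) / β)
              (Real.exp (-β * (t - s))) t := by
          intro t _
          have hg : HasDerivAt (fun t : ℝ => -β * (t - s)) (-β) t := by
            simpa using (((hasDerivAt_id t).sub_const s).const_mul (-β))
          have := (hg.exp).neg.div_const β
          convert this using 1
          · rfl
          · rfl
          · rfl
          field_simp
        rw [intervalIntegral.integral_eq_sub_of_hasDerivAt hderiv
          ((Real.continuous_exp.comp (continuous_const.mul (continuous_id.sub continuous_const))).intervalIntegrable _ _)]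
        have : -β * (s - s) = 0 := by ring
        rw [this, Real.exp_zero]
        ring
      rw [h1, h2, min_eq_right h.le, max_eq_left (by linarith)]
  -- final assembly
  have hden : s + 1/β ≠ 0 := by positivity
  have simp_rhs : ∀ I : ℝ, (β * s + 1) * (I / (s + 1/β)) = β * I := by
    intro I
    field_simp
  constructor
  · intro τ hτ
    rw [probB τ, key τ hτ, simp_rhs]
    have h1 : 0 ≤ min τ s := le_min hτ hs.le
    have heq : β * (min τ s + (1 - Real.exp (-β * max (τ - s) 0)) / β)
        = β * min τ s + (1 - Real.exp (-β * max (τ - s) 0)) := by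
      field_simp
    rw [heq]
    nlinarith
  · intro τ hτ
    rw [probB τ, key τ (by linarith), simp_rhs]
    have heq : β * (min τ s + (1 - Real.exp (-β * max (τ - s) 0)) / β)
        = β * min τ s + (1 - Real.exp (-β * max (τ - s) 0)) := by
      field_simp
    rw [heq, min_eq_right hτ.le]
    nlinarith
end
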